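/- Let I be a set of atoms closed under the rules: (1) A_{i-1}(x) implies existence of z with R(x,z) and T_i(z) in I; (2) A_{i-1}(x) implies existence of z with R(x,z) and F_i(z); (3) T_i(x) → A_i(x); (4) F_i(x) → A_i(x); (5) A_n(x) implies existence of z with R(x,z) and G(z); together with A_0(a). Then for every function ν : {1,...,n} → Bool there exist terms w_0 = a, w_1, ..., w_{n+1} in I such that A_i(w_i) ∈ I and R(w_i, w_{i+1}) ∈ I for all 0 ≤ i ≤ n, G(w_{n+1}) ∈ I, and for each 1 ≤ i ≤ n, T_i(w_i) ∈ I if ν(i) = true and F_i(w_i) ∈ I if ν(i) = false. -/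

import Mathlib

/-!
Walk from `a` one level at a time: at level `i - 1` rule (1) or rule (2), chosen according to
`ν i`, supplies an `R`-successor carrying the required literal, and rules (3)/(4) lift it to `A_i`
so that the walk can continue; at level `n` rule (5) supplies the final `G`-successor.
-/

theorem exists_chain {T : Type*} (Rel : T → T → Prop) (P : ℕ → T → Prop) {a : T} (ha : P 0 a)
    (n : ℕ) (step : ∀ i < n, ∀ x, P i x → ∃ z, Rel x z ∧ P (i + 1) z) :
    ∃ w : ℕ → T, w 0 = a ∧ (∀ i ≤ n, P i (w i)) ∧ ∀ i < n, Rel (w i) (w (i + 1)) := by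
  induction n with
  | zero => exact ⟨fun _ => a, rfl, fun i hi => by rwa [Nat.le_zero.mp hi], by simp⟩
  | succ n ih =>
    obtain ⟨w, hw0, hwP, hwR⟩ := ih fun i hi => step i (by omega)
    obtain ⟨z, hRel, hPz⟩ := step n n.lt_succ_self (w n) (hwP n le_rfl)
    have hw : ∀ i ≤ n, Function.update w (n + 1) z i = w i :=
      fun i hi => Function.update_of_ne (by omega) _ _
    refine ⟨Function.update w (n + 1) z, by rw [hw 0 n.zero_le, hw0], fun i hi => ?_,
      fun i hi => ?_⟩
    · rcases Nat.le_succ_iff.mp hi with hi | rfl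
      · rw [hw i hi]; exact hwP i hi
      · rwa [Function.update_self]
    · rcases Nat.lt_succ_iff_lt_or_eq.mp hi with hi | rfl
      · rw [hw i (by omega), hw (i + 1) hi]; exact hwR i hi
      · rwa [Function.update_self, hw i le_rfl]

theorem exists_rel_literal {T : Type*} (i : ℕ) (A Tp Fp : ℕ → T → Prop) (Rel : T → T → Prop)
    (b : Bool) {x : T} (hT : ∃ z, Rel x z ∧ Tp i z) (hF : ∃ z, Rel x z ∧ Fp i z)
    (hTA : ∀ z, Tp i z → A i z) (hFA : ∀ z, Fp i z → A i z) :
    ∃ z, Rel x z ∧ A i z ∧ (b = true → Tp i z) ∧ (b = false → Fp i z) := by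
  cases b
  · obtain ⟨z, hRel, hz⟩ := hF
    exact ⟨z, hRel, hFA z hz, nofun, fun _ => hz⟩
  · obtain ⟨z, hRel, hz⟩ := hT
    exact ⟨z, hRel, hTA z hz, fun _ => hz, nofun⟩

/-- If the set of atoms `I` (rendered via its characteristic predicates `A`, `Tp`, `Fp`,
`G`, `Rel`) satisfies the closure rules (1)-(5) and contains `A_0(a)`, then for every
truth assignment `ν` there is a path `w_0 = a, w_1, ..., w_{n+1}` realising `ν`. -/
theorem stmt_14 {T : Type*} (n : ℕ) (A Tp Fp : ℕ → T → Prop) (G : T → Prop)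
    (Rel : T → T → Prop) (a : T)
    (ha : A 0 a)
    (h1 : ∀ i : ℕ, 1 ≤ i → i ≤ n → ∀ x : T, A (i - 1) x → ∃ z, Rel x z ∧ Tp i z)
    (h2 : ∀ i : ℕ, 1 ≤ i → i ≤ n → ∀ x : T, A (i - 1) x → ∃ z, Rel x z ∧ Fp i z)
    (h3 : ∀ i : ℕ, 1 ≤ i → i ≤ n → ∀ x : T, Tp i x → A i x)
    (h4 : ∀ i : ℕ, 1 ≤ i → i ≤ n → ∀ x : T, Fp i x → A i x)
    (h5 : ∀ x : T, A n x → ∃ z, Rel x z ∧ G z) :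
    ∀ ν : ℕ → Bool, ∃ w : ℕ → T,
      w 0 = a ∧
      (∀ i : ℕ, i ≤ n → A i (w i)) ∧
      (∀ i : ℕ, i ≤ n → Rel (w i) (w (i + 1))) ∧
      G (w (n + 1)) ∧
      (∀ i : ℕ, 1 ≤ i → i ≤ n →
        (ν i = true → Tp i (w i)) ∧ (ν i = false → Fp i (w i))) := by
  intro ν
  let P : ℕ → T → Prop := fun i x =>
    (i ≤ n → A i x ∧ (1 ≤ i → (ν i = true → Tp i x) ∧ (ν i = false → Fp i x))) ∧
      (i = n + 1 → G x)
  have step : ∀ i < n + 1, ∀ x, P i x → ∃ z, Rel x z ∧ P (i + 1) z := by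
    intro i hi x hx
    rcases Nat.lt_succ_iff_lt_or_eq.mp hi with hi | rfl
    · have hxA : A (i + 1 - 1) x := (hx.1 hi.le).1
      obtain ⟨z, hRel, hzA, hzT, hzF⟩ := exists_rel_literal (i + 1) A Tp Fp Rel (ν (i + 1))
        (h1 _ (by omega) hi x hxA) (h2 _ (by omega) hi x hxA) (h3 _ (by omega) hi)
        (h4 _ (by omega) hi)
      exact ⟨z, hRel, fun _ => ⟨hzA, fun _ => ⟨hzT, hzF⟩⟩, by omega⟩
    · obtain ⟨z, hRel, hG⟩ := h5 x (hx.1 le_rfl).1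
      exact ⟨z, hRel, by omega, fun _ => hG⟩
  obtain ⟨w, hw0, hwP, hwR⟩ := exists_chain Rel P ⟨fun _ => ⟨ha, by omega⟩, by omega⟩ (n + 1) step
  exact ⟨w, hw0, fun i hi => ((hwP i (by omega)).1 hi).1, fun i hi => hwR i (by omega),
    (hwP (n + 1) le_rfl).2 rfl, fun i hi1 hi2 => ((hwP i (by omega)).1 hi2).2 hi1⟩
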